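/- arXiv:2001.03825 — 2 statements merged into one kernel-verified Lean document; each statement's English description precedes it below -/
import Mathlib

section
/- For even k ≥ 2, if a polynomial w of degree at most k on [-1,1] satisfies ∫_{-1}^{1} w dx = 0 and w(-1) + w(1) = 0 and ∫_{-1}^{1} w v' dx = 0 for all polynomials v of degree at most k, then w = 0. -/
/-!
Every polynomial of degree `< k` is the derivative of one of degree `≤ k`, so `w` is orthogonal
on `[-1, 1]` to all polynomials of degree `< k`. Since `k` is even, the odd part
`d(x) = w(x) - w(-x)` has degree `< k`, and `∫ d² = 2 ∫ w d = 0`; hence `w` is even, and the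
boundary condition gives `w(±1) = 0`. Then `w = (x - 1)(x + 1) u` with `deg u < k`, and
`0 = ∫ w u = ∫ (x² - 1) u²` forces `u = 0`.
-/

open Polynomial Set intervalIntegral

namespace Polynomial

theorem coeff_comp_neg_X {R : Type*} [CommRing R] (p : R[X]) (n : ℕ) :
    (p.comp (-X)).coeff n = (-1) ^ n * p.coeff n := by
  simpa [mul_comm] using comp_C_mul_X_coeff (p := p) (r := -1) (n := n)

theorem degree_sub_comp_neg_X_lt {R : Type*} [CommRing R] {p : R[X]} {k : ℕ} (hk : Even k)
    (hp : p.degree ≤ k) : (p - p.comp (-X)).degree < k := by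
  rw [degree_lt_iff_coeff_zero]
  intro m hm
  rw [coeff_sub, coeff_comp_neg_X]
  rcases hm.eq_or_lt with rfl | hlt
  · rw [hk.neg_one_pow, one_mul, sub_self]
  · rw [coeff_eq_zero_of_degree_lt (hp.trans_lt (by exact_mod_cast hlt)), mul_zero, sub_self]

theorem exists_derivative_eq_of_degree_lt {K : Type*} [Field K] [CharZero K] {p : K[X]} {n : ℕ}
    (hp : p.degree < n) : ∃ q : K[X], q.degree ≤ n ∧ derivative q = p := by
  refine ⟨p.sum fun i a => C (a / (i + 1)) * X ^ (i + 1), ?_, ?_⟩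
  · refine (degree_sum_le _ _).trans (Finset.sup_le fun i hi => ?_)
    have hi : (i : WithBot ℕ) < n := (le_degree_of_mem_supp i hi).trans_lt hp
    exact (degree_C_mul_X_pow_le _ _).trans (by exact_mod_cast hi)
  · conv_rhs => rw [← p.sum_C_mul_X_pow_eq]
    rw [Polynomial.sum, Polynomial.sum, map_sum]
    refine Finset.sum_congr rfl fun i _ => ?_
    rw [derivative_C_mul_X_pow, Nat.cast_add_one,
      div_mul_cancel₀ _ (Nat.cast_add_one_ne_zero i), Nat.add_sub_cancel]

theorem eq_zero_of_integral_eq_zero_of_nonneg {a b : ℝ} (hab : a < b) {p : ℝ[X]}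
    (hp : ∀ x ∈ Ioc a b, 0 ≤ p.eval x) (h : ∫ x in a..b, p.eval x = 0) : p = 0 := by
  by_contra hp0
  obtain ⟨c, hc, hpc⟩ : ∃ c ∈ Ioc a b, ¬ p.IsRoot c :=
    ((Ioc_infinite hab).sdiff (p.finite_setOfPred_isRoot hp0)).nonempty
  have := integral_pos hab p.continuous.continuousOn hp
    ⟨c, Ioc_subset_Icc_self hc, (hp c hc).lt_of_ne' hpc⟩
  exact this.ne' h

theorem eq_zero_of_integral_mul_eq_zero_of_eval_eq_zero {a b : ℝ} (hab : a < b) {k : ℕ}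
    {w : ℝ[X]} (hw : w.degree ≤ k) (ha : w.eval a = 0) (hb : w.eval b = 0)
    (horth : ∀ p : ℝ[X], p.degree < k → ∫ x in a..b, w.eval x * p.eval x = 0) : w = 0 := by
  obtain ⟨u, rfl⟩ : (X - C a) * (X - C b) ∣ w :=
    (isCoprime_X_sub_C_of_isUnit_sub (sub_ne_zero.2 hab.ne).isUnit).mul_dvd
      (dvd_iff_isRoot.2 ha) (dvd_iff_isRoot.2 hb)
  have hq : (X - C a) * (X - C b) ≠ 0 := mul_ne_zero (X_sub_C_ne_zero a) (X_sub_C_ne_zero b)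
  rcases eq_or_ne u 0 with rfl | hu
  · rw [mul_zero]
  have hu_deg : u.degree < k := by
    rw [degree_mul, degree_mul, degree_X_sub_C, degree_X_sub_C, degree_eq_natDegree hu] at hw
    rw [degree_eq_natDegree hu]
    norm_cast at hw ⊢
    omega
  have hneg : -((X - C a) * (X - C b) * u * u) = 0 := by
    refine eq_zero_of_integral_eq_zero_of_nonneg hab (fun x hx => ?_) ?_
    · simp only [eval_neg, eval_mul, eval_sub, eval_X, eval_C]
      nlinarith [mul_nonneg (mul_nonneg (sub_nonneg.2 hx.2) (sub_nonneg.2 hx.1.le))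
        (mul_self_nonneg (u.eval x))]
    · simpa only [eval_neg, eval_mul, integral_neg, neg_eq_zero]
        using horth u hu_deg
  simp [hq, hu] at hneg

end Polynomial

theorem integral_sub_comp_neg_sq {f : ℝ → ℝ} (hf : Continuous f) (a : ℝ) :
    ∫ x in -a..a, (f x - f (-x)) ^ 2 = 2 * ∫ x in -a..a, f x * (f x - f (-x)) := by
  have hint : ∀ g : ℝ → ℝ, Continuous g → IntervalIntegrable g MeasureTheory.volume (-a) a :=
    fun g hg => hg.intervalIntegrable _ _
  have hsymm : ∫ x in -a..a, f (-x) * (f x - f (-x)) = -∫ x in -a..a, f x * (f x - f (-x)) := by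
    have := integral_comp_neg (a := -a) (b := a) fun y => f y * (f (-y) - f y)
    simp only [neg_neg] at this
    rw [this, ← integral_neg]
    congr 1; ext; ring
  calc ∫ x in -a..a, (f x - f (-x)) ^ 2
      = ∫ x in -a..a, (f x * (f x - f (-x)) - f (-x) * (f x - f (-x))) := by congr 1; ext; ring
    _ = 2 * ∫ x in -a..a, f x * (f x - f (-x)) := by
      rw [integral_sub (hint _ (by fun_prop)) (hint _ (by fun_prop)), hsymm]
      ring

theorem stmt2_general (k : ℕ) (hk : Even k) (w : Polynomial ℝ)
    (hw : w.degree ≤ (k : ℕ))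
    (hbd : w.eval (-1) + w.eval 1 = 0)
    (horth : ∀ v : Polynomial ℝ, v.degree ≤ (k : ℕ) →
      (∫ x in (-1:ℝ)..1, w.eval x * (Polynomial.derivative v).eval x) = 0) :
    w = 0 := by
  have horth_lt : ∀ p : ℝ[X], p.degree < k → ∫ x in (-1:ℝ)..1, w.eval x * p.eval x = 0 := by
    intro p hp
    obtain ⟨v, hv, rfl⟩ := exists_derivative_eq_of_degree_lt hp
    exact horth v hv
  set d := w - w.comp (-X)
  have hd_eval : ∀ x, d.eval x = w.eval x - w.eval (-x) := by simp [d, eval_comp]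
  have hd : d ^ 2 = 0 := by
    refine eq_zero_of_integral_eq_zero_of_nonneg (a := -1) (b := 1) (by norm_num)
      (fun x _ => by rw [eval_pow]; positivity) ?_
    simp only [eval_pow, hd_eval]
    rw [integral_sub_comp_neg_sq w.continuous]
    simp only [← hd_eval, horth_lt d (degree_sub_comp_neg_X_lt hk hw), mul_zero]
  have hsymm : w.eval 1 = w.eval (-1) := by
    simpa [hd_eval, sub_eq_zero] using congr_arg (eval 1) (pow_eq_zero_iff two_ne_zero |>.1 hd)
  exact eq_zero_of_integral_mul_eq_zero_of_eval_eq_zero (by norm_num) hw (by linarith)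
    (by linarith) horth_lt

theorem stmt2 (k : ℕ) (hk : Even k) (hk2 : 2 ≤ k) (w : Polynomial ℝ)
    (hw : w.degree ≤ (k : ℕ))
    (havg : (∫ x in (-1:ℝ)..1, w.eval x) = 0)
    (hbd : w.eval (-1) + w.eval 1 = 0)
    (horth : ∀ v : Polynomial ℝ, v.degree ≤ (k : ℕ) →
      (∫ x in (-1:ℝ)..1, w.eval x * (Polynomial.derivative v).eval x) = 0) :
    w = 0 :=
  stmt2_general k hk w hw hbd horth
end

section
/- Approximation property of P_h^*: for even k, if w ∈ H^{k+1}(I) on an interval I of length h, then ‖w - P_h^* w‖_{L²(I)} ≤ C h^{k+1} |w|_{H^{k+1}(I)}, where P_h^* w is the degree-≤k polynomial matching the moments of w against degree-≤(k-1) polynomials and the average endpoint value, and C depends only on k. -/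
/-- `P` is the special local projection `P_h^⋆` of `u` on the cell `[a,b]`. -/
def IsProjStar (k : ℕ) (a b : ℝ) (u : ℝ → ℝ) (P : Polynomial ℝ) : Prop :=
  P.degree ≤ (k : ℕ) ∧
  (∀ v : Polynomial ℝ, v.degree < (k : WithBot ℕ) →
    (∫ x in a..b, P.eval x * v.eval x) = ∫ x in a..b, u x * v.eval x) ∧
  (P.eval b + P.eval a) / 2 = (u b + u a) / 2

/-!
Taylor's formula with integral remainder gives a polynomial `T` of degree `k` with
`|w - T| ≤ M := h^k / k! · ∫ |w^(k+1)|` on the cell. Since `P_h^⋆` reproduces `T`,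
`w - P_h^⋆ w = (w - T) - P_h^⋆ (w - T)`, so it suffices that `P_h^⋆` is bounded in `L^∞`
uniformly in `h`. After the affine change of variables onto `[0, 1]` this is the injectivity of
the degrees of freedom on polynomials of degree `≤ k`: a polynomial of degree `≤ k` orthogonal to
all polynomials of degree `< k` is a multiple of the shifted Legendre polynomial, whose two
endpoint values are both `k!` when `k` is even, so the endpoint average pins the multiple down.
Cauchy–Schwarz, `∫ |w^(k+1)| ≤ √h ‖w^(k+1)‖`, turns the `L^∞` bound into the `L²` one.
-/

open Polynomial MeasureTheory Set
open scoped Nat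

namespace Polynomial

theorem isRoot_iterate_derivative_of_pow_dvd {R : Type*} [CommRing R] {p : R[X]} {t : R}
    {n m : ℕ} (h : (X - C t) ^ n ∣ p) (hm : m < n) : (derivative^[m] p).IsRoot t :=
  dvd_iff_isRoot.mp <|
    (dvd_pow_self _ (Nat.sub_ne_zero_of_lt hm)).trans
      (pow_sub_dvd_iterate_derivative_of_pow_dvd m h)

theorem mem_degreeLT_succ_iff_natDegree_le {R : Type*} [Semiring R] {p : R[X]} {k : ℕ} :
    p ∈ degreeLT R (k + 1) ↔ p.natDegree ≤ k := by
  rw [degreeLT_succ_eq_degreeLE, mem_degreeLE, natDegree_le_iff_degree_le]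

theorem abs_eval_le_sum_abs_coeff {p : ℝ[X]} {n : ℕ} (hp : p.natDegree < n) {y : ℝ}
    (hy : |y| ≤ 1) : |p.eval y| ≤ ∑ i ∈ Finset.range n, |p.coeff i| := by
  rw [eval_eq_sum_range' hp]
  refine (Finset.abs_sum_le_sum_abs _ _).trans (Finset.sum_le_sum fun i _ => ?_)
  rw [abs_mul, abs_pow]
  exact mul_le_of_le_one_right (abs_nonneg _) (pow_le_one₀ (abs_nonneg _) hy)

theorem eq_zero_of_integral_eval_sq_eq_zero {p : ℝ[X]} {a b : ℝ} (hab : a < b)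
    (h : ∫ x in a..b, p.eval x ^ 2 = 0) : p = 0 := by
  rw [intervalIntegral.integral_eq_zero_iff_of_nonneg_ae
      (ae_of_all _ fun x => sq_nonneg (p.eval x)) ((p.continuous.pow 2).intervalIntegrable a b),
    Ioc_eq_empty_of_le hab.le, union_empty] at h
  have hzero :=
    Measure.eqOn_Ioc_of_ae_eq volume h (p.continuous.pow 2).continuousOn continuousOn_const
  refine p.eq_zero_of_infinite_isRoot ((Ioc_infinite hab).mono fun x hx => ?_)
  simpa using hzero hx

theorem integral_mul_eq_zero_of_integral_mul_pow_eq_zero {Q v : ℝ[X]} {a b : ℝ} {k : ℕ}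
    (hmom : ∀ i < k, ∫ x in a..b, Q.eval x * x ^ i = 0) (hv : v.natDegree < k) :
    ∫ x in a..b, Q.eval x * v.eval x = 0 := by
  simp_rw [eval_eq_sum_range' hv, Finset.mul_sum, mul_left_comm (Q.eval _)]
  rw [intervalIntegral.integral_finsetSum fun i _ =>
    (by fun_prop : Continuous fun x => v.coeff i * (Q.eval x * x ^ i)).intervalIntegrable a b]
  refine Finset.sum_eq_zero fun i hi => ?_
  rw [intervalIntegral.integral_const_mul, hmom i (Finset.mem_range.mp hi), mul_zero]

theorem integral_mul_iterate_derivative {S : ℝ[X]} {a b : ℝ} {n : ℕ}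
    (ha : ∀ m < n, (derivative^[m] S).IsRoot a) (hb : ∀ m < n, (derivative^[m] S).IsRoot b)
    (v : ℝ[X]) :
    ∫ x in a..b, v.eval x * (derivative^[n] S).eval x =
      (-1) ^ n * ∫ x in a..b, (derivative^[n] v).eval x * S.eval x := by
  induction n generalizing v with
  | zero => simp
  | succ n ih =>
    rw [Function.iterate_succ_apply' derivative n S,
      intervalIntegral.integral_mul_deriv_eq_deriv_mul (fun x _ => v.hasDerivAt x)
        (fun x _ => (derivative^[n] S).hasDerivAt x)
        ((derivative v).continuous.intervalIntegrable _ _)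
        ((derivative^[n] S).derivative.continuous.intervalIntegrable _ _),
      (ha n n.lt_succ_self).eq_zero, (hb n n.lt_succ_self).eq_zero,
      ih (fun m hm => ha m (by omega)) (fun m hm => hb m (by omega)),
      Function.iterate_succ_apply derivative n v]
    ring

/-- `k!` times the shifted Legendre polynomial of degree `k` on `[0, 1]` (Rodrigues' formula). -/
noncomputable def rodrigues (k : ℕ) : ℝ[X] := derivative^[k] (X ^ k * (X - 1) ^ k)

theorem integral_mul_rodrigues_eq_zero {k : ℕ} {v : ℝ[X]} (hv : v.natDegree < k) :
    ∫ x in (0 : ℝ)..1, v.eval x * (rodrigues k).eval x = 0 := by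
  rw [rodrigues, integral_mul_iterate_derivative (fun m hm => ?_) (fun m hm => ?_),
    iterate_derivative_eq_zero hv]
  · simp
  · exact isRoot_iterate_derivative_of_pow_dvd (by simp) hm
  · exact isRoot_iterate_derivative_of_pow_dvd (by simp) hm

theorem natDegree_rodrigues_le (k : ℕ) : (rodrigues k).natDegree ≤ k := by
  have h : (X ^ k * (X - 1 : ℝ[X]) ^ k).natDegree ≤ k + k := by compute_degree!
  exact (natDegree_iterate_derivative _ k).trans (by omega)

theorem coeff_rodrigues_self_ne_zero (k : ℕ) : (rodrigues k).coeff k ≠ 0 := by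
  have hmonic : (X ^ k * (X - 1 : ℝ[X]) ^ k).Monic := by monicity!
  have hdeg : (X ^ k * (X - 1 : ℝ[X]) ^ k).natDegree = k + k := by compute_degree!
  rw [rodrigues, coeff_iterate_derivative, ← hdeg, hmonic.coeff_natDegree, hdeg]
  simp [Nat.descFactorial_eq_zero_iff_lt]

theorem rodrigues_eval_zero (k : ℕ) : (rodrigues k).eval 0 = (-1) ^ k * k ! := by
  rw [← coeff_zero_eq_eval_zero, rodrigues, coeff_iterate_derivative, zero_add,
    Nat.descFactorial_self, coeff_X_pow_mul', if_pos le_rfl, Nat.sub_self,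
    coeff_zero_eq_eval_zero]
  simp [mul_comm]

theorem rodrigues_comp_one_sub_X (k : ℕ) :
    rodrigues k = (-1) ^ k * (rodrigues k).comp (1 - X) := by
  have hsymm : (X ^ k * (X - 1 : ℝ[X]) ^ k).comp (1 - X) = X ^ k * (X - 1) ^ k := by
    simp only [mul_comp, pow_comp, X_comp, sub_comp, one_comp]
    rw [← mul_pow, ← mul_pow]
    ring
  rw [rodrigues, ← iterate_derivative_comp_one_sub_X, hsymm]

theorem rodrigues_eval_zero_add_eval_one {k : ℕ} (hk : Even k) :
    (rodrigues k).eval 0 + (rodrigues k).eval 1 = 2 * k ! := by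
  have h01 : (rodrigues k).eval 0 = (rodrigues k).eval 1 := by
    conv_lhs => rw [rodrigues_comp_one_sub_X]
    simp [hk.neg_one_pow]
  rw [← h01, rodrigues_eval_zero, hk.neg_one_pow]
  ring

end Polynomial

noncomputable def projStarData (k : ℕ) : ℝ[X] →ₗ[ℝ] Fin (k + 1) → ℝ where
  toFun p i :=
    if (i : ℕ) < k then ∫ x in (0 : ℝ)..1, p.eval x * x ^ (i : ℕ) else (p.eval 0 + p.eval 1) / 2
  map_add' p q := by
    funext i
    simp only [eval_add, add_mul, Pi.add_apply]
    split_ifs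
    · exact intervalIntegral.integral_add
        ((p.continuous.mul (continuous_pow _)).intervalIntegrable _ _)
        ((q.continuous.mul (continuous_pow _)).intervalIntegrable _ _)
    · ring
  map_smul' r p := by
    funext i
    simp only [eval_smul, smul_eq_mul, mul_assoc, Pi.smul_apply, RingHom.id_apply]
    split_ifs
    · exact intervalIntegral.integral_const_mul r _
    · ring

theorem eq_zero_of_projStarData_eq_zero {k : ℕ} (hk : Even k) {Q : ℝ[X]}
    (hdeg : Q.natDegree ≤ k) (h : projStarData k Q = 0) : Q = 0 := by
  have hmom : ∀ i < k, ∫ x in (0 : ℝ)..1, Q.eval x * x ^ i = 0 := fun i hi => by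
    simpa [projStarData, hi] using congrFun h ⟨i, by omega⟩
  have hend : Q.eval 0 + Q.eval 1 = 0 := by
    simpa [projStarData] using congrFun h (Fin.last k)
  set R := rodrigues k
  set c := Q.coeff k / R.coeff k
  set Q' := Q - C c * R
  have hRk : R.coeff k ≠ 0 := coeff_rodrigues_self_ne_zero k
  have hRdeg : R.natDegree ≤ k := natDegree_rodrigues_le k
  have hQ'deg : Q'.degree < k := by
    refine (degree_lt_iff_coeff_zero _ _).2 fun m hm => ?_
    rcases hm.eq_or_lt with rfl | hm
    · simp [Q', c, div_mul_cancel₀ _ hRk]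
    · simp [Q', coeff_eq_zero_of_natDegree_lt (hdeg.trans_lt hm),
        coeff_eq_zero_of_natDegree_lt (hRdeg.trans_lt hm)]
  have horth : ∀ v : ℝ[X], v.natDegree < k → ∫ x in (0 : ℝ)..1, Q'.eval x * v.eval x = 0 := by
    intro v hv
    simp only [Q', eval_sub, eval_mul, eval_C, sub_mul, mul_assoc, mul_comm (R.eval _)]
    rw [intervalIntegral.integral_sub (Continuous.intervalIntegrable (by fun_prop) _ _)
        (Continuous.intervalIntegrable (by fun_prop) _ _),
      intervalIntegral.integral_const_mul, integral_mul_rodrigues_eq_zero hv,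
      integral_mul_eq_zero_of_integral_mul_pow_eq_zero hmom hv]
    simp
  have hQ' : Q' = 0 := by
    by_contra hne
    exact hne <| eq_zero_of_integral_eval_sq_eq_zero zero_lt_one <| by
      simpa [sq] using horth Q' ((natDegree_lt_iff_degree_lt hne).2 hQ'deg)
  have hQ : Q = C c * R := sub_eq_zero.mp hQ'
  have hc : c = 0 := by
    simp only [hQ, eval_mul, eval_C] at hend
    rw [← mul_add, rodrigues_eval_zero_add_eval_one hk] at hend
    simpa [Nat.factorial_ne_zero] using hend
  rw [hQ, hc, C_0, zero_mul]

theorem exists_abs_eval_le_mul_norm_projStarData {k : ℕ} (hk : Even k) :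
    ∃ K, 0 ≤ K ∧ ∀ Q : ℝ[X], Q.natDegree ≤ k → ∀ y ∈ Icc (0 : ℝ) 1,
      |Q.eval y| ≤ K * ‖projStarData k Q‖ := by
  let f := projStarData k ∘ₗ (degreeLT ℝ (k + 1)).subtype ∘ₗ
    (degreeLTEquiv ℝ (k + 1)).symm.toLinearMap
  have hf : Function.Injective f := by
    refine (injective_iff_map_eq_zero f).2 fun c hc => ?_
    set q := (degreeLTEquiv ℝ (k + 1)).symm c
    have hq : (q : ℝ[X]) = 0 :=
      eq_zero_of_projStarData_eq_zero hk (mem_degreeLT_succ_iff_natDegree_le.mp q.2) hc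
    simpa [q] using congrArg (degreeLTEquiv ℝ (k + 1)) (Subtype.ext hq : q = 0)
  obtain ⟨K, -, hK⟩ := f.injective_iff_antilipschitz.mp hf
  refine ⟨(k + 1) * K, by positivity, fun Q hQ y hy => ?_⟩
  set c := degreeLTEquiv ℝ (k + 1) ⟨Q, mem_degreeLT_succ_iff_natDegree_le.mpr hQ⟩
  have hc : ‖c‖ ≤ K * ‖projStarData k Q‖ := by
    simpa [f, c] using ZeroHomClass.bound_of_antilipschitz f hK c
  have hcoeff : ∀ i ∈ Finset.range (k + 1), |Q.coeff i| ≤ ‖c‖ := fun i hi =>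
    norm_le_pi_norm c ⟨i, Finset.mem_range.mp hi⟩
  calc |Q.eval y| ≤ ∑ i ∈ Finset.range (k + 1), |Q.coeff i| :=
        Q.abs_eval_le_sum_abs_coeff (Nat.lt_succ_of_le hQ)
          (abs_le.2 ⟨by linarith [hy.1], hy.2⟩)
    _ ≤ (k + 1) * ‖c‖ := by
        simpa using Finset.sum_le_sum hcoeff
    _ ≤ (k + 1) * K * ‖projStarData k Q‖ := by
        rw [mul_assoc]; gcongr

theorem sub_div_sub_mem_unit_Icc {a b x : ℝ} (hab : a < b) (hx : x ∈ Icc a b) :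
    (x - a) / (b - a) ∈ Icc (0 : ℝ) 1 :=
  ⟨div_nonneg (sub_nonneg.2 hx.1) (sub_pos.2 hab).le,
    (div_le_one (sub_pos.2 hab)).2 (sub_le_sub_right hx.2 a)⟩

theorem IsProjStar.abs_integral_eval_affine_mul_pow_le {k i : ℕ} {a b M : ℝ} {u : ℝ → ℝ}
    {P : ℝ[X]} (hP : IsProjStar k a b u P) (hab : a < b) (hu : ∀ x ∈ Icc a b, |u x| ≤ M)
    (hi : i < k) : |∫ y in (0 : ℝ)..1, P.eval (a + (b - a) * y) * y ^ i| ≤ M := by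
  have hh : 0 < b - a := sub_pos.2 hab
  set v : ℝ[X] := (C (b - a)⁻¹ * (X - C a)) ^ i
  have hv : ∀ x, v.eval x = ((x - a) / (b - a)) ^ i := fun x => by simp [v, div_eq_inv_mul]
  have hvdeg : v.degree < k := by
    refine lt_of_le_of_lt ?_ (WithBot.coe_lt_coe.2 hi)
    exact degree_le_of_natDegree_le (by simp only [v]; compute_degree!)
  have hrescale : ∫ y in (0 : ℝ)..1, P.eval (a + (b - a) * y) * y ^ i =
      (b - a)⁻¹ * ∫ x in a..b, u x * v.eval x := by
    rw [← hP.2.1 v hvdeg]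
    have := intervalIntegral.integral_comp_add_mul (fun x => P.eval x * v.eval x) hh.ne' a
      (a := 0) (b := 1)
    rw [mul_zero, add_zero, mul_one, add_sub_cancel, smul_eq_mul] at this
    rw [← this]
    congr 1 with y
    rw [hv, add_sub_cancel_left, mul_div_cancel_left₀ _ hh.ne']
  have hbound : |∫ x in a..b, u x * v.eval x| ≤ M * (b - a) := by
    have := intervalIntegral.norm_integral_le_of_norm_le_const (a := a) (b := b)
      (f := fun x => u x * v.eval x) (C := M) fun x hx => by
        rw [uIoc_of_le hab.le] at hx
        have hx' := sub_div_sub_mem_unit_Icc hab (Ioc_subset_Icc_self hx)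
        rw [Real.norm_eq_abs, abs_mul, hv, abs_pow, abs_of_nonneg hx'.1]
        exact (mul_le_of_le_one_right (abs_nonneg _) (pow_le_one₀ hx'.1 hx'.2)).trans
          (hu x (Ioc_subset_Icc_self hx))
    rwa [Real.norm_eq_abs, abs_of_pos hh] at this
  rw [hrescale, abs_mul, abs_of_pos (inv_pos.2 hh)]
  calc (b - a)⁻¹ * |∫ x in a..b, u x * v.eval x| ≤ (b - a)⁻¹ * (M * (b - a)) := by gcongr
    _ = M := by field_simp

theorem exists_isProjStar_abs_eval_le {k : ℕ} (hk : Even k) :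
    ∃ K, 0 ≤ K ∧ ∀ a b : ℝ, a < b → ∀ (u : ℝ → ℝ) (P : ℝ[X]), IsProjStar k a b u P →
      ∀ M, (∀ x ∈ Icc a b, |u x| ≤ M) → ∀ x ∈ Icc a b, |P.eval x| ≤ K * M := by
  obtain ⟨K, hK, href⟩ := exists_abs_eval_le_mul_norm_projStarData hk
  refine ⟨K, hK, fun a b hab u P hP M hu x hx => ?_⟩
  set Q := P.comp (C a + C (b - a) * X)
  have hQ : ∀ y, Q.eval y = P.eval (a + (b - a) * y) := fun y => by simp [Q]
  have hM : 0 ≤ M := (abs_nonneg _).trans (hu a (left_mem_Icc.2 hab.le))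
  have hQdeg : Q.natDegree ≤ k := by
    have hPdeg : P.natDegree ≤ k := natDegree_le_iff_degree_le.mpr hP.1
    have hlin : (C a + C (b - a) * X).natDegree ≤ 1 := by compute_degree
    exact natDegree_comp_le.trans ((Nat.mul_le_mul hPdeg hlin).trans_eq (mul_one k))
  have hdata : ‖projStarData k Q‖ ≤ M := by
    refine (pi_norm_le_iff_of_nonneg hM).2 fun i => ?_
    simp only [projStarData, LinearMap.coe_mk, AddHom.coe_mk, Real.norm_eq_abs, hQ]
    split_ifs with hi
    · exact hP.abs_integral_eval_affine_mul_pow_le hab hu hi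
    · rw [mul_zero, add_zero, mul_one, add_sub_cancel, add_comm, hP.2.2, abs_le]
      have ha := abs_le.mp (hu a (left_mem_Icc.2 hab.le))
      have hb := abs_le.mp (hu b (right_mem_Icc.2 hab.le))
      constructor <;> linarith [ha.1, ha.2, hb.1, hb.2]
  calc |P.eval x| = |Q.eval ((x - a) / (b - a))| := by
        rw [hQ, mul_div_cancel₀ _ (sub_pos.2 hab).ne', add_sub_cancel]
    _ ≤ K * ‖projStarData k Q‖ := href Q hQdeg _ (sub_div_sub_mem_unit_Icc hab hx)
    _ ≤ K * M := by gcongr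

theorem IsProjStar.sub_polynomial {k : ℕ} {a b : ℝ} {u : ℝ → ℝ} {P : ℝ[X]}
    (hP : IsProjStar k a b u P) (hu : IntervalIntegrable u volume a b) {T : ℝ[X]}
    (hT : T.degree ≤ k) : IsProjStar k a b (fun x => u x - T.eval x) (P - T) := by
  refine ⟨(degree_sub_le P T).trans (max_le hP.1 hT), fun v hv => ?_, ?_⟩
  · simp only [eval_sub, sub_mul]
    rw [intervalIntegral.integral_sub (Continuous.intervalIntegrable (by fun_prop) _ _)
        (Continuous.intervalIntegrable (by fun_prop) _ _),
      intervalIntegral.integral_sub (hu.mul_continuousOn v.continuous.continuousOn)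
        (Continuous.intervalIntegrable (by fun_prop) _ _), hP.2.1 v hv]
  · simp only [eval_sub]
    linarith [hP.2.2]

noncomputable def taylorPolynomial (f : ℝ → ℝ) (n : ℕ) (x₀ : ℝ) : ℝ[X] :=
  ∑ i ∈ Finset.range (n + 1), C (iteratedDeriv i f x₀ / i !) * (X - C x₀) ^ i

theorem natDegree_taylorPolynomial_le (f : ℝ → ℝ) (n : ℕ) (x₀ : ℝ) :
    (taylorPolynomial f n x₀).natDegree ≤ n :=
  natDegree_sum_le_of_forall_le _ _ fun i hi =>
    (natDegree_C_mul_le _ _).trans <|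
      (natDegree_pow_le_of_le i (natDegree_X_sub_C_le _)).trans <|
        by simpa using Finset.mem_range_succ_iff.mp hi

theorem taylorPolynomial_eval {f : ℝ → ℝ} {n : ℕ} (hf : ContDiff ℝ n f) {s : Set ℝ} {x₀ : ℝ}
    (hs : UniqueDiffOn ℝ s) (hx₀ : x₀ ∈ s) (x : ℝ) :
    (taylorPolynomial f n x₀).eval x = taylorWithinEval f n s x₀ x := by
  rw [taylor_within_apply, taylorPolynomial, eval_finsetSum]
  refine Finset.sum_congr rfl fun i hi => ?_
  have hi : (i : WithTop ℕ∞) ≤ n := by exact_mod_cast Finset.mem_range_succ_iff.mp hi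
  rw [iteratedDerivWithin_eq_iteratedDeriv hs (hf.of_le hi).contDiffAt hx₀]
  simp only [eval_mul, eval_C, eval_pow, eval_sub, eval_X, smul_eq_mul]
  ring

theorem sub_taylorPolynomial_eval {f : ℝ → ℝ} {n : ℕ} (hf : ContDiff ℝ (n + 1 : ℕ) f)
    (x₀ x : ℝ) : f x - (taylorPolynomial f n x₀).eval x =
      ∫ t in x₀..x, (x - t) ^ n / n ! * iteratedDeriv (n + 1) f t := by
  have hfn : ContDiff ℝ n f := hf.of_le (by exact_mod_cast n.le_succ)
  rcases eq_or_ne x₀ x with rfl | hne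
  · simp [taylorPolynomial_eval hfn uniqueDiffOn_univ (mem_univ x₀), taylorWithinEval_self]
  have hs := uniqueDiffOn_uIcc hne
  rw [taylorPolynomial_eval hfn hs left_mem_uIcc, taylor_integral_remainder hf.contDiffOn]
  refine intervalIntegral.integral_congr fun t ht => ?_
  simp only [smul_eq_mul, iteratedDerivWithin_eq_iteratedDeriv hs hf.contDiffAt ht]

theorem abs_sub_taylorPolynomial_eval_le {f : ℝ → ℝ} {n : ℕ} (hf : ContDiff ℝ (n + 1 : ℕ) f)
    {a b x : ℝ} (hx : x ∈ Icc a b) :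
    |f x - (taylorPolynomial f n a).eval x| ≤
      (b - a) ^ n / n ! * ∫ t in a..b, |iteratedDeriv (n + 1) f t| := by
  have hg : Continuous (iteratedDeriv (n + 1) f) := hf.continuous_iteratedDeriv _ le_rfl
  rw [sub_taylorPolynomial_eval hf, ← intervalIntegral.integral_const_mul]
  calc |∫ t in a..x, (x - t) ^ n / n ! * iteratedDeriv (n + 1) f t|
      ≤ ∫ t in a..x, |(x - t) ^ n / n ! * iteratedDeriv (n + 1) f t| :=
        intervalIntegral.abs_integral_le_integral_abs hx.1
    _ ≤ ∫ t in a..x, (b - a) ^ n / n ! * |iteratedDeriv (n + 1) f t| := by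
        refine intervalIntegral.integral_mono_on hx.1
          (Continuous.intervalIntegrable (by fun_prop) _ _)
          (Continuous.intervalIntegrable (by fun_prop) _ _) fun t ht => ?_
        rw [abs_mul, abs_div, abs_pow, Nat.abs_cast]
        gcongr
        exact abs_le.2 ⟨by linarith [ht.2, hx.1, hx.2], by linarith [ht.1, hx.2]⟩
    _ ≤ ∫ t in a..b, (b - a) ^ n / n ! * |iteratedDeriv (n + 1) f t| := by
        refine intervalIntegral.integral_mono_interval le_rfl hx.1 hx.2
          (ae_of_all _ fun t => ?_) (Continuous.intervalIntegrable (by fun_prop) _ _)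
        have : 0 ≤ b - a := by linarith [hx.1, hx.2]
        positivity

theorem sq_integral_abs_le_mul_integral_sq {g : ℝ → ℝ} (hg : Continuous g) {a b : ℝ}
    (hab : a ≤ b) : (∫ x in a..b, |g x|) ^ 2 ≤ (b - a) * ∫ x in a..b, g x ^ 2 := by
  set I := ∫ x in a..b, |g x|
  set J := ∫ x in a..b, g x ^ 2
  have hexpand :
      ∫ x in a..b, ((b - a) * |g x| - I) ^ 2 = (b - a) * ((b - a) * J - I ^ 2) := by
    have h : (fun x => ((b - a) * |g x| - I) ^ 2) =
        fun x => ((b - a) ^ 2 * g x ^ 2 - 2 * (b - a) * I * |g x|) + I ^ 2 := by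
      funext x; rw [sub_sq, mul_pow, sq_abs]; ring
    rw [h, intervalIntegral.integral_add (Continuous.intervalIntegrable (by fun_prop) _ _)
        intervalIntegrable_const,
      intervalIntegral.integral_sub (Continuous.intervalIntegrable (by fun_prop) _ _)
        (Continuous.intervalIntegrable (by fun_prop) _ _),
      intervalIntegral.integral_const_mul, intervalIntegral.integral_const_mul,
      intervalIntegral.integral_const, smul_eq_mul]
    ring
  have hnonneg : 0 ≤ (b - a) * ((b - a) * J - I ^ 2) :=
    hexpand ▸ intervalIntegral.integral_nonneg hab fun x _ => sq_nonneg _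
  rcases hab.eq_or_lt with rfl | hlt
  · simp [I]
  · nlinarith [sub_pos.2 hlt]

theorem integral_abs_le_sqrt_mul_sqrt {g : ℝ → ℝ} (hg : Continuous g) {a b : ℝ} (hab : a ≤ b) :
    ∫ x in a..b, |g x| ≤ √(b - a) * √(∫ x in a..b, g x ^ 2) := by
  rw [← Real.sqrt_mul (sub_nonneg.2 hab)]
  exact (le_abs_self _).trans (Real.abs_le_sqrt (sq_integral_abs_le_mul_integral_sq hg hab))

theorem sqrt_integral_sq_le_of_abs_le {f : ℝ → ℝ} {a b B : ℝ} (hab : a ≤ b)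
    (hf : ∀ x ∈ Icc a b, |f x| ≤ B) : √(∫ x in a..b, f x ^ 2) ≤ √(b - a) * B := by
  have hB : 0 ≤ B := (abs_nonneg _).trans (hf a (left_mem_Icc.2 hab))
  have h := intervalIntegral.norm_integral_le_of_norm_le_const (a := a) (b := b)
    (f := fun x => f x ^ 2) (C := B ^ 2) fun x hx => by
      rw [uIoc_of_le hab] at hx
      rw [Real.norm_eq_abs, abs_pow]
      exact pow_le_pow_left₀ (abs_nonneg _) (hf x (Ioc_subset_Icc_self hx)) 2
  rw [Real.norm_eq_abs, abs_of_nonneg (sub_nonneg.2 hab)] at h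
  calc √(∫ x in a..b, f x ^ 2) ≤ √((b - a) * B ^ 2) :=
        Real.sqrt_le_sqrt ((le_abs_self _).trans (h.trans_eq (mul_comm _ _)))
    _ = √(b - a) * B := by rw [Real.sqrt_mul (sub_nonneg.2 hab), Real.sqrt_sq hB]

theorem stmt16 (k : ℕ) (hk : Even k) : ∃ C : ℝ,
    ∀ a b : ℝ, a < b →
      ∀ w : ℝ → ℝ, ContDiff ℝ (↑(k+1)) w →
        ∀ P : Polynomial ℝ, IsProjStar k a b w P →
          Real.sqrt (∫ x in a..b, (w x - P.eval x) ^ 2) ≤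
            C * (b - a) ^ (k+1) *
              Real.sqrt (∫ x in a..b, (iteratedDeriv (k+1) w x) ^ 2) := by
  obtain ⟨K, hK, hstable⟩ := exists_isProjStar_abs_eval_le hk
  refine ⟨(1 + K) / k !, fun a b hab w hw P hP => ?_⟩
  set T := taylorPolynomial w k a
  set M := (b - a) ^ k / k ! * ∫ x in a..b, |iteratedDeriv (k + 1) w x| with hM
  have hT : ∀ x ∈ Icc a b, |w x - T.eval x| ≤ M := fun x hx =>
    abs_sub_taylorPolynomial_eval_le hw hx
  have hPT := hstable a b hab _ _ (hP.sub_polynomial (T := T)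
    (hw.continuous.intervalIntegrable a b)
    (natDegree_le_iff_degree_le.mp (natDegree_taylorPolynomial_le w k a))) M hT
  have herr : ∀ x ∈ Icc a b, |w x - P.eval x| ≤ (1 + K) * M := fun x hx =>
    calc |w x - P.eval x| = |(w x - T.eval x) - (P - T).eval x| := by
          rw [eval_sub, sub_sub_sub_cancel_right]
      _ ≤ |w x - T.eval x| + |(P - T).eval x| := abs_sub _ _
      _ ≤ M + K * M := add_le_add (hT x hx) (hPT x hx)
      _ = (1 + K) * M := by ring
  have hCS := integral_abs_le_sqrt_mul_sqrt (hw.continuous_iteratedDeriv (k + 1) le_rfl) hab.le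
  set J := ∫ x in a..b, iteratedDeriv (k + 1) w x ^ 2
  calc √(∫ x in a..b, (w x - P.eval x) ^ 2) ≤ √(b - a) * ((1 + K) * M) :=
        sqrt_integral_sq_le_of_abs_le hab.le herr
    _ ≤ √(b - a) * ((1 + K) * ((b - a) ^ k / k ! * (√(b - a) * √J))) := by
        have : 0 ≤ b - a := (sub_pos.2 hab).le
        rw [hM]
        gcongr
    _ = (1 + K) / k ! * ((b - a) ^ k * (√(b - a) * √(b - a))) * √J := by ring
    _ = (1 + K) / k ! * (b - a) ^ (k + 1) * √J := by
        rw [Real.mul_self_sqrt (sub_pos.2 hab).le, pow_succ]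
end
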